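/- Let k be an uncountable algebraically closed field of characteristic 0 and let W = k[t,t⁻¹]∂ be the Witt algebra. If 𝔥 is a Lie subalgebra of W with dim_k(W/𝔥) = 1, then there exists x ∈ k with x ≠ 0 such that 𝔥 = (t−x)·k[t,t⁻¹]·∂. -/

import Mathlib

/-! Write `𝔥 = ker l` for a linear functional `l` and pick `e` with `l e = 1`. Because `𝔥` is
closed under the bracket, `l [a, b] = l a * l [e, b] - l b * l [e, a]`; on the basis `tⁿ∂` this
is a functional equation (`BracketRelation`) for `L n = l (tⁿ∂)` and `M n = l [e, tⁿ∂]`, whose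
only nonzero solutions are `L n = L 0 * xⁿ` with `x ≠ 0`. So `l` is a multiple of evaluation at
`x`, whose kernel consists of the multiples of `t - x`. -/

/-- Formal derivative on Laurent polynomials, sending `tⁿ` to `n·tⁿ⁻¹`. -/
noncomputable def lderiv {k : Type*} [CommRing k] (f : LaurentPolynomial k) : LaurentPolynomial k :=
  Finsupp.sum f.coeff fun n a => AddMonoidAlgebra.single (n - 1) ((n : k) * a)

open LaurentPolynomial

section Lderiv

variable {R : Type*} [CommRing R]

theorem lderiv_single (n : ℤ) (a : R) :
    lderiv (.single n a : R[T;T⁻¹]) = .single (n - 1) ((n : R) * a) := by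
  rw [lderiv, AddMonoidAlgebra.coeff_single]
  exact Finsupp.sum_single_index (by simp)

theorem lderiv_T (n : ℤ) : lderiv (T n : R[T;T⁻¹]) = (n : R) • T (n - 1) := by
  rw [T, lderiv_single, T, AddMonoidAlgebra.smul_single', mul_one]

theorem lderiv_add (f g : R[T;T⁻¹]) : lderiv (f + g) = lderiv f + lderiv g := by
  rw [lderiv, lderiv, lderiv, AddMonoidAlgebra.coeff_add]
  exact Finsupp.sum_add_index' (fun _ => by simp) fun _ _ _ => by
    rw [mul_add, AddMonoidAlgebra.single_add]

theorem lderiv_smul (c : R) (f : R[T;T⁻¹]) : lderiv (c • f) = c • lderiv f := by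
  induction f using LaurentPolynomial.induction_on' with
  | add f g hf hg => rw [smul_add, lderiv_add, lderiv_add, hf, hg, smul_add]
  | C_mul_T n a =>
    rw [← single_eq_C_mul_T, AddMonoidAlgebra.smul_single', lderiv_single, lderiv_single,
      AddMonoidAlgebra.smul_single', mul_left_comm]

noncomputable def lderivₗ : R[T;T⁻¹] →ₗ[R] R[T;T⁻¹] where
  toFun := lderiv
  map_add' := lderiv_add
  map_smul' := lderiv_smul

noncomputable def wittBracket : R[T;T⁻¹] →ₗ[R] R[T;T⁻¹] →ₗ[R] R[T;T⁻¹] :=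
  (LinearMap.mul R R[T;T⁻¹]).compl₂ lderivₗ - LinearMap.mul R R[T;T⁻¹] ∘ₗ lderivₗ

theorem wittBracket_apply (f g : R[T;T⁻¹]) : wittBracket f g = f * lderiv g - lderiv f * g :=
  rfl

theorem wittBracket_isAlt : (wittBracket (R := R)).IsAlt := fun f => by
  rw [wittBracket_apply, mul_comm, sub_self]

theorem wittBracket_T_T (m n : ℤ) :
    wittBracket (T m) (T n : R[T;T⁻¹]) = ((n : R) - m) • T (m + n - 1) := by
  rw [wittBracket_apply, lderiv_T, lderiv_T, mul_smul_comm, smul_mul_assoc, ← T_add, ← T_add,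
    sub_smul]
  ring_nf

end Lderiv

theorem Submodule.exists_surjective_ker_eq_of_rank_quotient_eq_one {K V : Type*} [Field K]
    [AddCommGroup V] [Module K V] {p : Submodule K V} (h : Module.rank K (V ⧸ p) = 1) :
    ∃ l : V →ₗ[K] K, Function.Surjective l ∧ LinearMap.ker l = p := by
  let φ := LinearEquiv.ofLiftRankEq (V ⧸ p) K
    (by rw [h, Module.rank_self, Cardinal.lift_one, Cardinal.lift_one])
  refine ⟨φ.toLinearMap ∘ₗ p.mkQ, φ.surjective.comp p.mkQ_surjective, ?_⟩
  rw [LinearEquiv.ker_comp, p.ker_mkQ]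

theorem LinearMap.IsAlt.map_apply_eq_of_ker_closed {K V : Type*} [CommRing K] [AddCommGroup V]
    [Module K V] {B : V →ₗ[K] V →ₗ[K] V} (hB : B.IsAlt) {l : V →ₗ[K] K}
    (hl : ∀ a ∈ LinearMap.ker l, ∀ b ∈ LinearMap.ker l, B a b ∈ LinearMap.ker l)
    {e : V} (he : l e = 1) (a b : V) :
    l (B a b) = l a * l (B e b) - l b * l (B e a) := by
  have hker : ∀ v, v - l v • e ∈ LinearMap.ker l := fun v => by simp [he]
  have hdecomp : B a b = B (a - l a • e) (b - l b • e) + l a • B e b - l b • B e a := by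
    simp only [map_sub, map_smul, LinearMap.sub_apply, LinearMap.smul_apply, hB.self_eq_zero,
      ← hB.neg a e]
    module
  rw [hdecomp, map_sub, map_add, LinearMap.mem_ker.mp (hl _ (hker a) _ (hker b)), map_smul,
    map_smul, smul_eq_mul, smul_eq_mul, zero_add]

namespace LaurentPolynomial

theorem linearMap_ext {R M : Type*} [CommSemiring R] [AddCommMonoid M] [Module R M]
    {φ ψ : R[T;T⁻¹] →ₗ[R] M} (h : ∀ n, φ (T n) = ψ (T n)) : φ = ψ :=
  AddMonoidAlgebra.lhom_ext' fun n => LinearMap.ext_ring (h n)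

theorem smeval_eq_eval₂ {R : Type*} [CommSemiring R] (f : R[T;T⁻¹]) (x : Rˣ) :
    f.smeval x = eval₂ (RingHom.id R) x f := by
  induction f using LaurentPolynomial.induction_on' with
  | add f g hf hg => rw [smeval_add, map_add, hf, hg]
  | C_mul_T n a => rw [smeval_C_mul_T_n, eval₂_C_mul_T, smul_eq_mul, RingHom.id_apply]

theorem smeval_eq_zero_iff_dvd {R : Type*} [CommRing R] (f : R[T;T⁻¹]) (x : Rˣ) :
    f.smeval x = 0 ↔ T 1 - C (x : R) ∣ f := by
  rw [smeval_eq_eval₂]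
  constructor
  · intro hf
    obtain ⟨n, p, hp⟩ := f.exists_T_pow
    have hroot : p.IsRoot x := by
      rw [Polynomial.IsRoot, ← Polynomial.eval₂_id, ← eval₂_toLaurent, hp, map_mul, hf, zero_mul]
    obtain ⟨q, rfl⟩ := Polynomial.dvd_iff_isRoot.mpr hroot
    refine ⟨Polynomial.toLaurent q * T (-n), ?_⟩
    rw [← mul_assoc, ← Polynomial.toLaurent_X, ← Polynomial.toLaurent_C, ← map_sub, ← map_mul, hp,
      mul_assoc, ← T_add, add_neg_cancel, T_zero, mul_one]
  · rintro ⟨r, rfl⟩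
    simp

end LaurentPolynomial

theorem eq_mul_zpow_of_apply_add_one {K : Type*} [Field K] {f : ℤ → K} {x : K} (hx : x ≠ 0)
    (h : ∀ n, f (n + 1) = x * f n) (n : ℤ) : f n = f 0 * x ^ n := by
  induction n using Int.induction_on with
  | zero => rw [zpow_zero, mul_one]
  | succ m ih => rw [h, ih, zpow_add_one₀ hx]; ring
  | pred m ih =>
    have e := h (-m - 1)
    rw [sub_add_cancel, ih] at e
    rw [zpow_sub_one₀ hx, ← mul_assoc, e, mul_comm x, mul_inv_cancel_right₀ hx]

section BracketRelation

variable {k : Type*} [Field k]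

def BracketRelation (L M : ℤ → k) : Prop :=
  ∀ m n : ℤ, ((n : k) - m) * L (m + n - 1) = L m * M n - L n * M m

variable [CharZero k] {L M : ℤ → k}

namespace BracketRelation

theorem apply_zero_mul_apply (h : BracketRelation L M) {n : ℤ} (hn : n ≠ 0) :
    L 0 * L n = L 1 * L (n - 1) := by
  have h1n := h 1 n
  have h0n := h 0 n
  have h01 := h 0 1
  rw [add_sub_cancel_left] at h1n
  rw [zero_add] at h0n
  norm_num at h1n h0n h01
  refine mul_left_cancel₀ (Int.cast_ne_zero.mpr hn) ?_
  -- eliminate `M n` between `h 0 n` and `h 1 n`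
  linear_combination L 0 * h1n - L 1 * h0n + L n * h01

theorem eq_zero_of_apply_zero (h : BracketRelation L M) (h0 : L 0 = 0) : L = 0 := by
  have h1 : L 1 = 0 := by
    simpa [h0] using (h.apply_zero_mul_apply two_ne_zero).symm
  by_contra hne
  obtain ⟨n₀, hn₀⟩ := Function.ne_iff.mp hne
  -- with `L 1 = 0`, `h 1 n` reads `(n - 1 + M 1) * L n = 0`, so `L` is supported at `n₀` alone
  have honly : ∀ m, m ≠ n₀ → L m = 0 := by
    intro m hm
    by_contra hm'
    have e₁ := h 1 n₀
    have e₂ := h 1 m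
    simp only [add_sub_cancel_left, h1, zero_mul, zero_sub] at e₁ e₂
    have e₁' : (n₀ : k) = 1 - M 1 := mul_right_cancel₀ hn₀ (by linear_combination e₁)
    have e₂' : (m : k) = 1 - M 1 := mul_right_cancel₀ hm' (by linear_combination e₂)
    exact hm (Int.cast_injective (e₂'.trans e₁'.symm))
  have hn₀_eq : n₀ = -1 := by
    have e := h 0 (n₀ + 1)
    rw [zero_add, add_sub_cancel_right, h0, honly (n₀ + 1) (by omega)] at e
    have e' : ((n₀ + 1 : ℤ) : k) * L n₀ = 0 := by push_cast at e ⊢; linear_combination e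
    have := (mul_eq_zero.mp e').resolve_right hn₀
    exact_mod_cast eq_neg_of_add_eq_zero_left (Int.cast_eq_zero.mp this)
  subst hn₀_eq
  have e := h 2 (-2)
  rw [honly 2 (by omega), honly (-2) (by omega)] at e
  norm_num at e
  exact hn₀ e

theorem apply_one_ne_zero (h : BracketRelation L M) (h0 : L 0 ≠ 0) : L 1 ≠ 0 := by
  intro h1
  have hL : ∀ n, n ≠ 0 → L n = 0 := fun n hn =>
    (mul_eq_zero.mp (by simpa [h1] using h.apply_zero_mul_apply hn)).resolve_left h0
  have e := h 2 (-1)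
  rw [hL 2 (by omega), hL (-1) (by omega)] at e
  norm_num at e
  exact h0 e

theorem apply_zero_mul_apply_zero (h : BracketRelation L M) (h0 : L 0 ≠ 0) :
    L 0 * L 0 = L 1 * L (-1) := by
  have e₁ := h 2 (-1)
  have e₂ := h 0 (-1)
  have e₃ := h 0 2
  have e₄ := h.apply_zero_mul_apply (n := 2) (by norm_num)
  have e₅ := h.apply_zero_mul_apply (n := -1) (by norm_num)
  norm_num at e₁ e₂ e₃ e₄ e₅
  refine mul_left_cancel₀ (mul_ne_zero three_ne_zero h0) ?_
  linear_combination (-(L 0 * L 0)) * e₁ + (L 0 * L 2) * e₂ + (-(L 0 * L (-1))) * e₃ +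
    (L (-2)) * e₄ + (-(L 1)) * e₅

theorem exists_eq_mul_zpow (h : BracketRelation L M) (hL : L ≠ 0) :
    ∃ x ≠ 0, ∀ n, L n = L 0 * x ^ n := by
  have h0 : L 0 ≠ 0 := fun h0 => hL (h.eq_zero_of_apply_zero h0)
  have hx : L 1 / L 0 ≠ 0 := div_ne_zero (h.apply_one_ne_zero h0) h0
  refine ⟨L 1 / L 0, hx, eq_mul_zpow_of_apply_add_one hx fun n => ?_⟩
  rw [div_mul_eq_mul_div, eq_div_iff h0, mul_comm]
  rcases eq_or_ne n (-1) with rfl | hn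
  · exact h.apply_zero_mul_apply_zero h0
  · simpa using h.apply_zero_mul_apply (n := n + 1) (by omega)

end BracketRelation

end BracketRelation

theorem witt_codim_one_subalgebra_general {k : Type*} [Field k] [CharZero k]
    (𝔥 : Submodule k (LaurentPolynomial k))
    (hLie : ∀ a ∈ 𝔥, ∀ b ∈ 𝔥, a * lderiv b - lderiv a * b ∈ 𝔥)
    (hcodim : Module.rank k (LaurentPolynomial k ⧸ 𝔥) = 1) :
    ∃ x : k, x ≠ 0 ∧ ∀ f : LaurentPolynomial k,
      f ∈ 𝔥 ↔ ∃ r : LaurentPolynomial k,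
        f = (LaurentPolynomial.T 1 - LaurentPolynomial.C x) * r := by
  obtain ⟨l, hl_surj, rfl⟩ := Submodule.exists_surjective_ker_eq_of_rank_quotient_eq_one hcodim
  obtain ⟨e, he⟩ := hl_surj 1
  have hrel : BracketRelation (fun n => l (T n)) (fun n => l (wittBracket e (T n))) := by
    intro m n
    rw [← smul_eq_mul, ← map_smul, ← wittBracket_T_T]
    exact wittBracket_isAlt.map_apply_eq_of_ker_closed hLie he _ _
  have hL : (fun n => l (T n)) ≠ 0 := fun h0 => by
    have : l = 0 := linearMap_ext fun n => congrFun h0 n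
    simp [this] at he
  obtain ⟨x, hx, hLx⟩ := hrel.exists_eq_mul_zpow hL
  have hl_eq : l = l (T 0) • leval k (Units.mk0 x hx) :=
    linearMap_ext fun n => by simp [hLx n]
  have hl0 : l (T 0) ≠ 0 := by simpa using (hrel.eq_zero_of_apply_zero).mt hL
  refine ⟨x, hx, fun f => ?_⟩
  rw [LinearMap.mem_ker, hl_eq, LinearMap.smul_apply, smul_eq_zero_iff_right hl0, leval_apply,
    smeval_eq_zero_iff_dvd]
  rfl

/-- Over an uncountable algebraically closed field of characteristic zero, every Lie
subalgebra `𝔥` of the Witt algebra `W = k[t,t⁻¹]∂` of codimension one is of the form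
`(t−x)·k[t,t⁻¹]·∂` for some `x ∈ k`, `x ≠ 0`. -/
theorem witt_codim_one_subalgebra {k : Type*} [Field k] [CharZero k] [IsAlgClosed k]
    [Uncountable k]
    (𝔥 : Submodule k (LaurentPolynomial k))
    (hLie : ∀ a ∈ 𝔥, ∀ b ∈ 𝔥, a * lderiv b - lderiv a * b ∈ 𝔥)
    (hcodim : Module.rank k (LaurentPolynomial k ⧸ 𝔥) = 1) :
    ∃ x : k, x ≠ 0 ∧ ∀ f : LaurentPolynomial k,
      f ∈ 𝔥 ↔ ∃ r : LaurentPolynomial k,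
        f = (LaurentPolynomial.T 1 - LaurentPolynomial.C x) * r :=
  witt_codim_one_subalgebra_general 𝔥 hLie hcodim
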